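/- arXiv:1606.00461 — 3 statements merged into one kernel-verified Lean document; each statement's English description precedes it below -/
import Mathlib

section
/- The stabilizer in SL₂(ℝ) of the binary cubic form x⁺ = x²y − xy² (coordinates (0,1,−1,0)) under the twisted action contains exactly the three matrices I, [[0,1],[−1,−1]], [[−1,−1],[1,0]]; in particular it is cyclic of order 3. -/
noncomputable section

/-- Evaluation of the binary cubic form with coefficient vector `v = (a,b,c,d)`. -/
def formEval (v : Fin 4 → ℝ) (x y : ℝ) : ℝ :=
  v 0 * x ^ 3 + v 1 * x ^ 2 * y + v 2 * x * y ^ 2 + v 3 * y ^ 3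

/-- `cubicActs g v w` states that `w` is the coefficient vector of `g · f_v`, i.e. of the
binary cubic form obtained from the form with coefficients `v` by the coordinate change
`(x,y) ↦ (x,y)·gᵗ` (in the convention where the new variables are
`(x * g 0 0 + y * g 1 0, x * g 0 1 + y * g 1 1)`). -/
def cubicActs (g : Matrix (Fin 2) (Fin 2) ℝ) (v w : Fin 4 → ℝ) : Prop :=
  ∀ x y : ℝ, formEval w x y =
    formEval v (x * g 0 0 + y * g 1 0) (x * g 0 1 + y * g 1 1)

/-- Key algebraic lemma: solving the system of equations for the stabilizer. -/
lemma key_xplus (a b c d : ℝ) (hdet : a*d - b*c = 1)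
    (e1 : a*(b*(a-b))=0) (e2 : c*(d*(c-d))=0)
    (e3 : (a+c)*((b+d)*((a+c)-(b+d)))=0)
    (e4 : (a-c)*((b-d)*((a-c)-(b-d)))=-2) :
    (a=1∧b=0∧c=0∧d=1) ∨ (a=0∧b=1∧c=-1∧d=-1) ∨ (a=-1∧b=-1∧c=1∧d=0) := by
  rcases mul_eq_zero.mp e1 with hA | h1
  · -- a = 0
    subst hA
    have hbc : b*c = -1 := by linarith
    rcases mul_eq_zero.mp e2 with hC | h2
    · exfalso; rw [hC] at hbc; norm_num at hbc
    rcases mul_eq_zero.mp h2 with hD | hCD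
    · -- d = 0
      exfalso
      subst hD
      rcases mul_eq_zero.mp e3 with h | h
      · have : c = 0 := by linarith
        rw [this] at hbc; norm_num at hbc
      rcases mul_eq_zero.mp h with h | h
      · have : b = 0 := by linarith
        rw [this] at hbc; norm_num at hbc
      · have hbeqc : b = c := by linarith
        rw [hbeqc] at hbc
        linarith [mul_self_nonneg c]
    · -- c = d
      have hdc : d = c := by linarith
      rw [hdc] at e4
      have hb2 : b - c = 2 := by linear_combination -e4 + (b-c)*hbc
      have hc : c = -1 := by nlinarith [sq_nonneg (c+1)]
      right; left
      exact ⟨rfl, by linarith, hc, by linarith⟩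
  rcases mul_eq_zero.mp h1 with hB | hAB
  · -- b = 0
    subst hB
    have had : a*d = 1 := by linarith
    rcases mul_eq_zero.mp e2 with hC | h2
    · -- c = 0
      subst hC
      rcases mul_eq_zero.mp e3 with h | h
      · exfalso
        have : a = 0 := by linarith
        rw [this] at had; norm_num at had
      rcases mul_eq_zero.mp h with h | h
      · exfalso
        have : d = 0 := by linarith
        rw [this] at had; norm_num at had
      · have hada : d = a := by linarith
        rw [hada] at had e4
        have h2 : (a-1)*(a+1) = 0 := by linear_combination had
        rcases mul_eq_zero.mp h2 with h | h
        · left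
          have ha1 : a = 1 := by linarith
          exact ⟨ha1, rfl, rfl, by linarith⟩
        · exfalso
          have ha : a = -1 := by linarith
          rw [ha] at e4; norm_num at e4
    rcases mul_eq_zero.mp h2 with hD | hCD
    · exfalso; rw [hD] at had; norm_num at had
    · -- c = d
      exfalso
      have hdc : d = c := by linarith
      rw [hdc] at had e3
      have hc0 : c ≠ 0 := by
        intro h; rw [h] at had; norm_num at had
      rcases mul_eq_zero.mp e3 with h | h
      · have hanc : a = -c := by linarith
        rw [hanc] at had
        nlinarith [mul_self_nonneg c]
      rcases mul_eq_zero.mp h with h | h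
      · exact hc0 (by linarith)
      · have : a = 0 := by linarith
        rw [this] at had; norm_num at had
  · -- a = b
    have hba : b = a := by linarith
    rw [hba] at hdet e3 e4
    have ha0 : a ≠ 0 := by
      intro h; rw [h] at hdet; norm_num at hdet
    rcases mul_eq_zero.mp e2 with hC | h2
    · -- c = 0
      subst hC
      exfalso
      have had : a*d = 1 := by linear_combination hdet
      rcases mul_eq_zero.mp e3 with h | h
      · exact ha0 (by linarith)
      rcases mul_eq_zero.mp h with h | h
      · have : d = -a := by linarith
        rw [this] at had
        nlinarith [mul_self_nonneg a]
      · have : d = 0 := by linarith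
        rw [this] at had; norm_num at had
    rcases mul_eq_zero.mp h2 with hD | hCD
    · -- d = 0
      subst hD
      have hac : a*c = -1 := by linear_combination -hdet
      rcases mul_eq_zero.mp e3 with h | h
      · have hcma : c = -a := by linarith
        rw [hcma] at hac e4
        have ha2 : a^2 = 1 := by linear_combination -hac
        have ha3 : a^3 = -1 := by linear_combination e4/2
        have ham : a = -1 := by linear_combination ha3 - a*ha2
        right; right
        exact ⟨ham, by linarith, by linarith, rfl⟩
      rcases mul_eq_zero.mp h with h | h
      · exact absurd (by linarith : a = 0) ha0
      · exfalso
        have : c = 0 := by linarith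
        rw [this] at hac; norm_num at hac
    · -- c = d
      exfalso
      have hdc : d = c := by linarith
      rw [hdc] at hdet
      linarith

/-- The stabilizer in `SL₂(ℝ)` of the form `x⁺ = x²y − xy²` consists exactly of
`I`, `[[0,1],[−1,−1]]`, `[[−1,−1],[1,0]]`; in particular it is cyclic of order 3,
generated by `[[0,1],[−1,−1]]`. -/
theorem stabilizer_xplus :
    {g : Matrix (Fin 2) (Fin 2) ℝ | g.det = 1 ∧ cubicActs g ![0, 1, -1, 0] ![0, 1, -1, 0]}
      = {(1 : Matrix (Fin 2) (Fin 2) ℝ), !![0, 1; -1, -1], !![-1, -1; 1, 0]} ∧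
    !![(0:ℝ), 1; -1, -1] * !![0, 1; -1, -1] = !![-1, -1; 1, 0] ∧
    !![(0:ℝ), 1; -1, -1] ^ 3 = 1 := by
  have hmul : !![(0:ℝ), 1; -1, -1] * !![0, 1; -1, -1] = !![-1, -1; 1, 0] := by
    rw [Matrix.mul_fin_two]; norm_num
  refine ⟨?_, hmul, ?_⟩
  · ext g
    simp only [Set.mem_setOf_eq, Set.mem_insert_iff, Set.mem_singleton_iff]
    constructor
    · rintro ⟨hdet, hact⟩
      rw [Matrix.det_fin_two] at hdet
      have h10 := hact 1 0
      have h01 := hact 0 1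
      have h11 := hact 1 1
      have h1m := hact 1 (-1)
      simp only [formEval, Matrix.cons_val_zero, Matrix.cons_val_one, Matrix.head_cons,
        Matrix.cons_val_two, Matrix.tail_cons, Matrix.cons_val_three] at h10 h01 h11 h1m
      have e1 : g 0 0 * (g 0 1 * (g 0 0 - g 0 1)) = 0 := by linear_combination -h10
      have e2 : g 1 0 * (g 1 1 * (g 1 0 - g 1 1)) = 0 := by linear_combination -h01
      have e3 : (g 0 0 + g 1 0)*((g 0 1 + g 1 1)*((g 0 0 + g 1 0)-(g 0 1 + g 1 1)))=0 := by
        linear_combination -h11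
      have e4 : (g 0 0 - g 1 0)*((g 0 1 - g 1 1)*((g 0 0 - g 1 0)-(g 0 1 - g 1 1)))=-2 := by
        linear_combination -h1m
      have hg : g = !![g 0 0, g 0 1; g 1 0, g 1 1] := Matrix.eta_fin_two g
      rcases key_xplus _ _ _ _ hdet e1 e2 e3 e4 with
        ⟨h1, h2, h3, h4⟩ | ⟨h1, h2, h3, h4⟩ | ⟨h1, h2, h3, h4⟩
      · left; rw [hg, h1, h2, h3, h4, Matrix.one_fin_two]
      · right; left; rw [hg, h1, h2, h3, h4]
      · right; right; rw [hg, h1, h2, h3, h4]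
    · rintro (rfl | rfl | rfl)
      · refine ⟨Matrix.det_one, fun x y => ?_⟩
        simp [formEval, Matrix.one_apply]
      · refine ⟨by rw [Matrix.det_fin_two_of]; norm_num, fun x y => ?_⟩
        simp only [formEval, Matrix.cons_val_zero, Matrix.cons_val_one, Matrix.head_cons,
          Matrix.cons_val_two, Matrix.tail_cons, Matrix.cons_val_three, Matrix.cons_val',
          Matrix.cons_val_fin_one, Matrix.empty_val', Matrix.head_fin_const, Matrix.of_apply]
        ring
      · refine ⟨by rw [Matrix.det_fin_two_of]; norm_num, fun x y => ?_⟩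
        simp only [formEval, Matrix.cons_val_zero, Matrix.cons_val_one, Matrix.head_cons,
          Matrix.cons_val_two, Matrix.tail_cons, Matrix.cons_val_three, Matrix.cons_val',
          Matrix.cons_val_fin_one, Matrix.empty_val', Matrix.head_fin_const, Matrix.of_apply]
        ring
  · rw [pow_succ, pow_two, hmul, Matrix.mul_fin_two, Matrix.one_fin_two]
    norm_num
end
end

section
/- The stabilizer in SL₂(ℝ) of the binary cubic form x⁻ = x²y + y³ (coordinates (0,1,0,1)) under the twisted action is trivial. -/
noncomputable section

/-- The stabilizer in `SL₂(ℝ)` of the form `x⁻ = x²y + y³` is trivial. -/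
theorem stabilizer_xminus (g : Matrix (Fin 2) (Fin 2) ℝ) (hg : g.det = 1)
    (hstab : cubicActs g ![0, 1, 0, 1] ![0, 1, 0, 1]) : g = 1 := by
  rw [Matrix.det_fin_two] at hg
  have h1 := hstab 1 0
  have h2 := hstab 0 1
  have h3 := hstab 1 1
  have h4 := hstab 1 (-1)
  simp only [formEval, Matrix.cons_val_zero, Matrix.cons_val_one, Matrix.head_cons,
    Matrix.cons_val_two, Matrix.tail_cons, Matrix.cons_val_three] at h1 h2 h3 h4
  ring_nf at h1 h2 h3 h4
  -- from h1 : 0 = a²b + b³ we get b = 0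
  have key : (g 0 0 * g 0 1) ^ 2 + (g 0 1 ^ 2) ^ 2 = 0 := by
    linear_combination (-(g 0 1)) * h1
  have hb2 : g 0 1 ^ 2 = 0 := by
    nlinarith [sq_nonneg (g 0 0 * g 0 1), sq_nonneg (g 0 1 ^ 2)]
  have hb0 : g 0 1 = 0 := by
    exact pow_eq_zero_iff (n := 2) (by norm_num) |>.mp hb2
  rw [hb0] at h3 h4 hg
  ring_nf at h3 h4 hg
  -- a²d = 1
  have ha2d : g 0 0 ^ 2 * g 1 1 = 1 := by linear_combination h2 - h3 / 2 + h4 / 2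
  -- acd = 0
  have hacd : g 0 0 * g 1 0 * g 1 1 = 0 := by linear_combination -h3 / 4 - h4 / 4
  have ha1 : g 0 0 = 1 := by linear_combination ha2d - g 0 0 * hg
  have hc0 : g 1 0 = 0 := by linear_combination hacd - g 1 0 * hg
  have hd1 : g 1 1 = 1 := by linear_combination hg - g 1 1 * ha1
  ext i j
  fin_cases i <;> fin_cases j <;>
    simp [Matrix.one_apply, ha1, hb0, hc0, hd1]
end
end

section
/- For a weakly multiplicative function ρ satisfying the Hecke relations, the local factor identity holds: for each prime p and for Re(x) > −1/4 where all series converge, G_p(x) := Σ_{j,k ≥ 0} ρ(p^{j+k}) p^{−j(1+x) − k(1+3x)} = L_p(1+x) · L_p(1+3x) · (1 + (ρ(p²) − ρ(p)²) p^{−2−4x} + E_p(x)), where L_p(s) = Σ_{n≥0} ρ(pⁿ) p^{−ns} and |E_p(x)| = O((1+|ρ(p)|)³ p^{−3−7 Re(x)}). -/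
noncomputable section

open Complex Finset Function

private lemma gcd_pow_pow' (p a b : ℕ) : Nat.gcd (p ^ a) (p ^ b) = p ^ min a b := by
  rcases le_total a b with h | h
  · rw [min_eq_left h, Nat.gcd_eq_left (pow_dvd_pow p h)]
  · rw [min_eq_right h, Nat.gcd_eq_right (pow_dvd_pow p h)]

private lemma hecke_rec' (ρ : ℕ → ℂ)
    (hecke : ∀ m n : ℕ, 0 < m → 0 < n →
      ρ m * ρ n = ∑ d ∈ (Nat.gcd m n).divisors, ρ (m * n / d ^ 2))
    {p : ℕ} (hp : p.Prime) (j k : ℕ) :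
    ρ (p ^ (j + 1)) * ρ (p ^ (k + 1)) = ρ (p ^ j) * ρ (p ^ k) + ρ (p ^ (j + k + 2)) := by
  have hpp := hp.pos
  have hmj := min_le_left j k
  have hmk := min_le_right j k
  have e1 := hecke (p ^ (j + 1)) (p ^ (k + 1)) (pow_pos hpp _) (pow_pos hpp _)
  rw [gcd_pow_pow', show min (j + 1) (k + 1) = min j k + 1 by omega,
    Nat.sum_divisors_prime_pow hp] at e1
  have ht1 : ∀ i ∈ range (min j k + 2),
      ρ (p ^ (j + 1) * p ^ (k + 1) / (p ^ i) ^ 2) = ρ (p ^ (j + k + 2 - 2 * i)) := by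
    intro i hi
    simp only [mem_range] at hi
    congr 1
    rw [← pow_add, ← pow_mul, Nat.pow_div (by omega) hpp]
    congr 1
    omega
  rw [Finset.sum_congr rfl ht1, Finset.sum_range_succ'] at e1
  have ht2 : ∀ i ∈ range (min j k + 1),
      ρ (p ^ (j + k + 2 - 2 * (i + 1))) = ρ (p ^ (j + k - 2 * i)) := by
    intro i hi
    simp only [mem_range] at hi
    congr 2
    omega
  rw [Finset.sum_congr rfl ht2] at e1
  have e2 := hecke (p ^ j) (p ^ k) (pow_pos hpp _) (pow_pos hpp _)
  rw [gcd_pow_pow', Nat.sum_divisors_prime_pow hp] at e2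
  have ht3 : ∀ i ∈ range (min j k + 1),
      ρ (p ^ j * p ^ k / (p ^ i) ^ 2) = ρ (p ^ (j + k - 2 * i)) := by
    intro i hi
    simp only [mem_range] at hi
    congr 1
    rw [← pow_add, ← pow_mul, Nat.pow_div (by omega) hpp]
    congr 1
    omega
  rw [Finset.sum_congr rfl ht3] at e2
  rw [e1, ← e2]
  norm_num

/-- Local factor identity for the double Dirichlet series `G_p(x)`: for a Hecke-eigen
coefficient sequence `ρ`, `G_p(x) = L_p(1+x) L_p(1+3x) (1 + (ρ(p²)−ρ(p)²)p^{−2−4x} + E_p(x))`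
with `|E_p(x)| = O((1+|ρ(p)|)³ p^{−3−7 Re x})`, uniformly for `Re(x) > −1/4`. -/
theorem local_factor_identity (ρ : ℕ → ℂ) (h1 : ρ 1 = 1)
    (hecke : ∀ m n : ℕ, 0 < m → 0 < n →
      ρ m * ρ n = ∑ d ∈ (Nat.gcd m n).divisors, ρ (m * n / d ^ 2))
    (hbd : ∀ ε : ℝ, 0 < ε → ∃ C : ℝ, ∀ n : ℕ, 1 ≤ n →
      ‖ρ n‖ ≤ C * (n : ℝ) ^ ((7 : ℝ) / 64 + ε)) :
    ∃ C' : ℝ, 0 < C' ∧ ∀ p : ℕ, p.Prime → ∀ x : ℂ, -(1 / 4 : ℝ) < x.re →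
      ∃ E : ℂ,
        (∑' jk : ℕ × ℕ,
            ρ (p ^ (jk.1 + jk.2)) *
              (p : ℂ) ^ (-(jk.1 : ℂ) * (1 + x) - (jk.2 : ℂ) * (1 + 3 * x)))
          = (∑' n : ℕ, ρ (p ^ n) * (p : ℂ) ^ (-(n : ℂ) * (1 + x))) *
              (∑' n : ℕ, ρ (p ^ n) * (p : ℂ) ^ (-(n : ℂ) * (1 + 3 * x))) *
              (1 + (ρ (p ^ 2) - ρ p ^ 2) * (p : ℂ) ^ (-2 - 4 * x) + E) ∧
        ‖E‖ ≤ C' * (1 + ‖ρ p‖) ^ 3 * (p : ℝ) ^ (-3 - 7 * x.re) := by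
  obtain ⟨C, hC⟩ := hbd ((1 : ℝ) / 64) (by norm_num)
  refine ⟨1, one_pos, fun p hp x hx => ?_⟩
  have hPpos : (0 : ℝ) < (p : ℝ) := by exact_mod_cast hp.pos
  have hP1 : (1 : ℝ) < (p : ℝ) := by exact_mod_cast hp.one_lt
  have hp0 : (p : ℂ) ≠ 0 := by exact_mod_cast hp.pos.ne'
  set a : ℂ := (p : ℂ) ^ (-(1 + x)) with hadef
  set b : ℂ := (p : ℂ) ^ (-(1 + 3 * x)) with hbdef
  have ha : ‖a‖ = (p : ℝ) ^ (-(1 + x.re)) := by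
    rw [hadef, norm_natCast_cpow_of_pos hp.pos]
    congr 1
  have hbn : ‖b‖ = (p : ℝ) ^ (-(1 + 3 * x.re)) := by
    rw [hbdef, norm_natCast_cpow_of_pos hp.pos]
    congr 1
    simp
  have hρn : ∀ n : ℕ, ‖ρ (p ^ n)‖ ≤ C * ((p : ℝ) ^ ((1 : ℝ) / 8)) ^ n := by
    intro n
    have h := hC (p ^ n) (Nat.one_le_pow n p hp.pos)
    have hco : ((p ^ n : ℕ) : ℝ) ^ ((7 : ℝ) / 64 + 1 / 64) = ((p : ℝ) ^ ((1 : ℝ) / 8)) ^ n := by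
      push_cast
      rw [← Real.rpow_natCast ((p : ℝ) ^ ((1 : ℝ) / 8)) n, ← Real.rpow_natCast (p : ℝ) n,
        ← Real.rpow_mul hPpos.le, ← Real.rpow_mul hPpos.le]
      norm_num
      ring_nf
    rwa [hco] at h
  have hra : (p : ℝ) ^ ((1 : ℝ) / 8) * ‖a‖ = (p : ℝ) ^ ((1 : ℝ) / 8 + -(1 + x.re)) := by
    rw [ha, ← Real.rpow_add hPpos]
  have hrb : (p : ℝ) ^ ((1 : ℝ) / 8) * ‖b‖ = (p : ℝ) ^ ((1 : ℝ) / 8 + -(1 + 3 * x.re)) := by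
    rw [hbn, ← Real.rpow_add hPpos]
  have hra1 : (p : ℝ) ^ ((1 : ℝ) / 8) * ‖a‖ < 1 := by
    rw [hra]; exact Real.rpow_lt_one_of_one_lt_of_neg hP1 (by linarith)
  have hrb1 : (p : ℝ) ^ ((1 : ℝ) / 8) * ‖b‖ < 1 := by
    rw [hrb]; exact Real.rpow_lt_one_of_one_lt_of_neg hP1 (by linarith)
  have hra0 : (0 : ℝ) ≤ (p : ℝ) ^ ((1 : ℝ) / 8) * ‖a‖ := by positivity
  have hrb0 : (0 : ℝ) ≤ (p : ℝ) ^ ((1 : ℝ) / 8) * ‖b‖ := by positivity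
  set A : ℕ → ℂ := fun n => ρ (p ^ n) * a ^ n with hAdef
  set B : ℕ → ℂ := fun n => ρ (p ^ n) * b ^ n with hBdef
  have hAle : ∀ n, ‖A n‖ ≤ C * ((p : ℝ) ^ ((1 : ℝ) / 8) * ‖a‖) ^ n := by
    intro n
    calc ‖A n‖ = ‖ρ (p ^ n)‖ * ‖a‖ ^ n := by rw [hAdef, norm_mul, norm_pow]
    _ ≤ C * ((p : ℝ) ^ ((1 : ℝ) / 8)) ^ n * ‖a‖ ^ n :=
        mul_le_mul_of_nonneg_right (hρn n) (pow_nonneg (norm_nonneg a) n)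
    _ = C * ((p : ℝ) ^ ((1 : ℝ) / 8) * ‖a‖) ^ n := by rw [mul_pow]; ring
  have hBle : ∀ n, ‖B n‖ ≤ C * ((p : ℝ) ^ ((1 : ℝ) / 8) * ‖b‖) ^ n := by
    intro n
    calc ‖B n‖ = ‖ρ (p ^ n)‖ * ‖b‖ ^ n := by rw [hBdef, norm_mul, norm_pow]
    _ ≤ C * ((p : ℝ) ^ ((1 : ℝ) / 8)) ^ n * ‖b‖ ^ n :=
        mul_le_mul_of_nonneg_right (hρn n) (pow_nonneg (norm_nonneg b) n)
    _ = C * ((p : ℝ) ^ ((1 : ℝ) / 8) * ‖b‖) ^ n := by rw [mul_pow]; ring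
  have hA : Summable fun n => ‖A n‖ :=
    Summable.of_nonneg_of_le (fun n => norm_nonneg _) hAle
      ((summable_geometric_of_lt_one hra0 hra1).mul_left C)
  have hB : Summable fun n => ‖B n‖ :=
    Summable.of_nonneg_of_le (fun n => norm_nonneg _) hBle
      ((summable_geometric_of_lt_one hrb0 hrb1).mul_left C)
  have hABs : Summable fun jk : ℕ × ℕ => A jk.1 * B jk.2 :=
    summable_mul_of_summable_norm hA hB
  set F : ℕ × ℕ → ℂ := fun jk => ρ (p ^ (jk.1 + jk.2)) * (a ^ jk.1 * b ^ jk.2) with hFdef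
  set G : ℕ × ℕ → ℂ := fun jk =>
    if 1 ≤ jk.1 ∧ 1 ≤ jk.2 then ρ (p ^ (jk.1 - 1)) * ρ (p ^ (jk.2 - 1)) * (a ^ jk.1 * b ^ jk.2)
    else 0 with hGdef
  set i : ℕ × ℕ → ℕ × ℕ := fun jk => (jk.1 + 1, jk.2 + 1) with hidef
  have hiinj : Function.Injective i := by
    rintro ⟨j1, k1⟩ ⟨j2, k2⟩ h
    simp only [hidef, Prod.mk.injEq] at h
    exact Prod.ext (by omega) (by omega)
  have hGi : ∀ jk : ℕ × ℕ, G (i jk) = a * b * (A jk.1 * B jk.2) := by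
    rintro ⟨j, k⟩
    simp only [hGdef, hidef, hAdef, hBdef]
    rw [if_pos (by omega)]
    simp only [Nat.add_sub_cancel]
    ring
  have hGsupp : ∀ jk ∉ Set.range i, G jk = 0 := by
    rintro ⟨j, k⟩ hjk
    simp only [hGdef]
    rw [if_neg]
    rintro ⟨hj, hk⟩
    exact hjk ⟨(j - 1, k - 1), by simp only [hidef]; exact Prod.ext (by omega) (by omega)⟩
  have hGs : Summable G := by
    rw [← hiinj.summable_iff hGsupp]
    have he : (G ∘ i) = fun jk : ℕ × ℕ => a * b * (A jk.1 * B jk.2) := funext hGi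
    rw [he]
    exact hABs.mul_left _
  have htsumG : ∑' jk : ℕ × ℕ, G jk = a * b * ((∑' n, A n) * (∑' n, B n)) := by
    rw [← hiinj.tsum_eq (f := G) (fun jk hjk => by
      by_contra hmem
      exact hjk (hGsupp jk hmem))]
    calc ∑' jk : ℕ × ℕ, G (i jk) = ∑' jk : ℕ × ℕ, a * b * (A jk.1 * B jk.2) := tsum_congr hGi
    _ = a * b * ∑' jk : ℕ × ℕ, A jk.1 * B jk.2 := tsum_mul_left
    _ = a * b * ((∑' n, A n) * (∑' n, B n)) := by
        rw [← tsum_mul_tsum_of_summable_norm hA hB]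
  have hkey : ∀ jk : ℕ × ℕ, F jk = A jk.1 * B jk.2 - G jk := by
    rintro ⟨j, k⟩
    match j, k with
    | 0, k =>
      simp only [hFdef, hGdef, hAdef, hBdef]
      rw [if_neg (by omega)]
      simp [h1]
    | j + 1, 0 =>
      simp only [hFdef, hGdef, hAdef, hBdef]
      rw [if_neg (by omega)]
      simp [h1]
    | j + 1, k + 1 =>
      have hr := hecke_rec' ρ hecke hp j k
      simp only [hFdef, hGdef, hAdef, hBdef]
      rw [if_pos (by omega)]
      simp only [Nat.add_sub_cancel]
      rw [show j + 1 + (k + 1) = j + k + 2 by ring]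
      linear_combination (-(a ^ (j + 1) * b ^ (k + 1))) * hr
  refine ⟨0, ?_, ?_⟩
  · have hL1 : (∑' n : ℕ, ρ (p ^ n) * (p : ℂ) ^ (-(n : ℂ) * (1 + x))) = ∑' n, A n :=
      tsum_congr fun n => by
        simp only [hAdef]
        rw [show -(n : ℂ) * (1 + x) = (n : ℂ) * (-(1 + x)) by ring, cpow_nat_mul]
    have hL3 : (∑' n : ℕ, ρ (p ^ n) * (p : ℂ) ^ (-(n : ℂ) * (1 + 3 * x))) = ∑' n, B n :=
      tsum_congr fun n => by
        simp only [hBdef]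
        rw [show -(n : ℂ) * (1 + 3 * x) = (n : ℂ) * (-(1 + 3 * x)) by ring, cpow_nat_mul]
    have hG2 : (∑' jk : ℕ × ℕ, ρ (p ^ (jk.1 + jk.2)) *
        (p : ℂ) ^ (-(jk.1 : ℂ) * (1 + x) - (jk.2 : ℂ) * (1 + 3 * x))) = ∑' jk, F jk :=
      tsum_congr fun jk => by
        simp only [hFdef]
        rw [show -(jk.1 : ℂ) * (1 + x) - (jk.2 : ℂ) * (1 + 3 * x)
            = (jk.1 : ℂ) * (-(1 + x)) + (jk.2 : ℂ) * (-(1 + 3 * x)) by ring,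
          cpow_add _ _ hp0, cpow_nat_mul, cpow_nat_mul]
    rw [hG2, hL1, hL3, tsum_congr hkey, Summable.tsum_sub hABs hGs,
      ← tsum_mul_tsum_of_summable_norm hA hB, htsumG]
    have h2 : ρ (p ^ 2) - ρ p ^ 2 = -1 := by
      have h0 := hecke_rec' ρ hecke hp 0 0
      simp only [pow_zero, pow_one, h1, mul_one, zero_add] at h0
      linear_combination -h0
    have hab : a * b = (p : ℂ) ^ (-2 - 4 * x) := by
      rw [hadef, hbdef, ← cpow_add _ _ hp0]
      congr 1
      ring
    rw [h2, ← hab]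
    ring
  · simp only [norm_zero]
    positivity
end
end
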